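/- Let S and T be inverse semigroups. The following are equivalent: (1) the presheaf categories PSh(L(S)) and PSh(L(T)) are equivalent; (2) there is a Morita context for the categories L(S) and L(T); (3) there is a Morita context for the Cauchy completions C(S) and C(T). -/

import Mathlib

universe u

open CategoryTheory

/-- An inverse semigroup: every element has a unique (von Neumann) inverse,
selected by `star`. -/
class InverseSemigroup (S : Type u) extends Semigroup S where
  star : S → S
  mul_star_mul : ∀ s : S, s * star s * s = s
  star_mul_star : ∀ s : S, star s * s * star s = star s
  star_unique : ∀ s t : S, s * t * s = s → t * s * t = t → t = star s

namespace InverseSemigroup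

variable {S : Type u} [InverseSemigroup S]

theorem star_star (s : S) : star (star s) = s :=
  (star_unique (star s) s (star_mul_star s) (mul_star_mul s)).symm

theorem star_idem {e : S} (he : e * e = e) : star e = e :=
  (star_unique e e (by rw [he, he]) (by rw [he, he])).symm

theorem mul_idem {e f : S} (he : e * e = e) (hf : f * f = f) :
    (e * f) * (e * f) = e * f := by
  set x := star (e * f) with hx
  have hxfix : (e * f) * x * (e * f) = e * f := mul_star_mul (e * f)
  have hxfix' : x * (e * f) * x = x := star_mul_star (e * f)
  have he1 : ∀ y : S, e * (e * y) = e * y := fun y => by rw [← mul_assoc, he]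
  have hf1 : ∀ y : S, f * (f * y) = f * y := fun y => by rw [← mul_assoc, hf]
  have A : e * (f * (x * (e * f))) = e * f := by
    simpa only [mul_assoc] using hxfix
  have B1 : ∀ y : S, x * (e * (f * (x * y))) = x * y := fun y => by
    have h := congrArg (· * y) hxfix'
    simpa only [mul_assoc] using h
  have h1 : (e * f) * (f * x * e) * (e * f) = e * f := by
    simp only [mul_assoc, hf1, he1]
    exact A
  have h2 : (f * x * e) * (e * f) * (f * x * e) = f * x * e := by
    simp only [mul_assoc, he1, hf1, B1]
  have hC : f * x * e = x := by
    have := star_unique (e * f) (f * x * e) h1 h2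
    rwa [← hx] at this
  have hCn : f * (x * e) = x := by simpa only [mul_assoc] using hC
  have key : (f * (x * e)) * (f * (x * e)) = f * (x * e) := by
    simp only [mul_assoc, B1]
  have hD : x * x = x := by rw [← hCn]; exact key
  have hE : e * f = x := (star_unique x (e * f) hxfix' hxfix).trans (star_idem hD)
  rw [hE]; exact hD

theorem idem_comm {e f : S} (he : e * e = e) (hf : f * f = f) :
    e * f = f * e := by
  have hef : (e * f) * (e * f) = e * f := mul_idem he hf
  have hfe : (f * e) * (f * e) = f * e := mul_idem hf he
  have he1 : ∀ y : S, e * (e * y) = e * y := fun y => by rw [← mul_assoc, he]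
  have hf1 : ∀ y : S, f * (f * y) = f * y := fun y => by rw [← mul_assoc, hf]
  have hefn : e * (f * (e * f)) = e * f := by simpa only [mul_assoc] using hef
  have hfen : f * (e * (f * e)) = f * e := by simpa only [mul_assoc] using hfe
  have h1 : (e * f) * (f * e) * (e * f) = e * f := by
    simp only [mul_assoc, hf1, he1]
    exact hefn
  have h2 : (f * e) * (e * f) * (f * e) = f * e := by
    simp only [mul_assoc, he1, hf1]
    exact hfen
  have := star_unique (e * f) (f * e) h1 h2
  rw [this, star_idem hef]

theorem star_mul (a b : S) : star (a * b) = star b * star a := by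
  set u := star a with hu
  set v := star b with hv
  have han : a * (u * a) = a := by simpa only [mul_assoc] using mul_star_mul a
  have hun : u * (a * u) = u := by simpa only [mul_assoc] using star_mul_star a
  have hbn : b * (v * b) = b := by simpa only [mul_assoc] using mul_star_mul b
  have hvn : v * (b * v) = v := by simpa only [mul_assoc] using star_mul_star b
  have ha1 : ∀ y : S, a * (u * (a * y)) = a * y := fun y => by
    have h := congrArg (· * y) (mul_star_mul a); simpa only [mul_assoc] using h
  have hv1 : ∀ y : S, v * (b * (v * y)) = v * y := fun y => by
    have h := congrArg (· * y) (star_mul_star b); simpa only [mul_assoc] using h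
  have hua : (u * a) * (u * a) = u * a := by
    simp only [mul_assoc]; rw [han]
  have hbv : (b * v) * (b * v) = b * v := by
    simp only [mul_assoc]; rw [hvn]
  have hc : (b * v) * (u * a) = (u * a) * (b * v) := idem_comm hbv hua
  have hc1 : ∀ y : S, b * (v * (u * (a * y))) = u * (a * (b * (v * y))) := fun y => by
    have h := congrArg (· * y) hc; simpa only [mul_assoc] using h
  have goal1 : (a * b) * (v * u) * (a * b) = a * b := by
    simp only [mul_assoc]
    rw [hc1, ha1, hbn]
  have goal2 : (v * u) * (a * b) * (v * u) = v * u := by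
    simp only [mul_assoc]
    rw [← hc1, hv1, hun]
  exact ((star_unique (a * b) (v * u) goal1 goal2)).symm

theorem star_mul_self_idem (s : S) : (star s * s) * (star s * s) = star s * s := by
  have h := congrArg (star s * ·) (mul_star_mul s)
  simpa only [mul_assoc] using h

theorem mul_star_self_idem (s : S) : (s * star s) * (s * star s) = s * star s := by
  have h := congrArg (· * star s) (mul_star_mul s)
  simpa only [mul_assoc] using h

end InverseSemigroup

open InverseSemigroup

/-- The left-cancellative category `L(S)` of an inverse semigroup `S`: objects are
the idempotents, and a morphism `f ⟶ e` is an element `s` with `e * s = s` and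
`s* * s = f`; composition is multiplication. -/
def LCat (S : Type u) [InverseSemigroup S] : Type u := {e : S // e * e = e}

namespace LCat

variable {S : Type u} [InverseSemigroup S]

instance : Category.{u} (LCat S) where
  Hom f e := {s : S // e.1 * s = s ∧ star s * s = f.1}
  id e := ⟨e.1, by rw [e.2], by rw [star_idem e.2, e.2]⟩
  comp := fun {f g e} u v => ⟨v.1 * u.1, by
      constructor
      · rw [← mul_assoc, v.2.1]
      · calc star (v.1 * u.1) * (v.1 * u.1)
            = star u.1 * ((star v.1 * v.1) * u.1) := by
              rw [InverseSemigroup.star_mul]; simp only [mul_assoc]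
          _ = star u.1 * (g.1 * u.1) := by rw [v.2.2]
          _ = star u.1 * u.1 := by rw [u.2.1]
          _ = f.1 := u.2.2⟩
  id_comp := fun {f e} u => by
    apply Subtype.ext
    show u.1 * f.1 = u.1
    have h2 := u.2.2
    calc u.1 * f.1 = u.1 * (star u.1 * u.1) := by rw [h2]
      _ = u.1 := by rw [← mul_assoc, mul_star_mul]
  comp_id := fun {f e} u => by
    apply Subtype.ext
    show e.1 * u.1 = u.1
    exact u.2.1
  assoc := fun u v w => Subtype.ext (mul_assoc w.1 v.1 u.1).symm

end LCat

theorem idem_left_absorb {S : Type u} [Semigroup S] {e f s : S}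
    (he : e * e = e) (h : e * s * f = s) : e * s = s := by
  conv_lhs => rw [← h]
  rw [← mul_assoc, ← mul_assoc, he]
  exact h

theorem idem_right_absorb {S : Type u} [Semigroup S] {e f s : S}
    (hf : f * f = f) (h : e * s * f = s) : s * f = s := by
  conv_lhs => rw [← h]
  rw [mul_assoc, hf]
  exact h

/-- The Cauchy completion `C(S)` of a semigroup `S`: objects are the idempotents,
and a morphism `f ⟶ e` is an element `s` with `e * s * f = s`; composition is
multiplication. -/
def CauchyCat (S : Type u) [Semigroup S] : Type u := {e : S // e * e = e}

namespace CauchyCat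

variable {S : Type u} [Semigroup S]

instance : Category.{u} (CauchyCat S) where
  Hom f e := {s : S // e.1 * s * f.1 = s}
  id e := ⟨e.1, by rw [e.2, e.2]⟩
  comp := fun {f g e} u v => ⟨v.1 * u.1, by
    rw [← mul_assoc, idem_left_absorb e.2 v.2, mul_assoc, idem_right_absorb f.2 u.2]⟩
  id_comp := fun {f e} u => Subtype.ext (idem_right_absorb f.2 u.2)
  comp_id := fun {f e} u => Subtype.ext (idem_left_absorb e.2 u.2)
  assoc := fun u v w => Subtype.ext (mul_assoc w.1 v.1 u.1).symm

end CauchyCat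

/-- A Morita context for categories `A` and `B`: a category `U` together with
weak equivalences (i.e. fully faithful and essentially surjective functors)
from `A` and from `B` to `U`. -/
def MoritaContext (A : Type u) [Category.{u} A] (B : Type u) [Category.{u} B] : Prop :=
  ∃ (U : Type u) (instU : Category.{u} U) (F : @Functor A _ U instU)
    (G : @Functor B _ U instU),
    F.Full ∧ F.Faithful ∧ F.EssSurj ∧ G.Full ∧ G.Faithful ∧ G.EssSurj

/-!
In `L(S)` every idempotent endomorphism is an identity. An equivalence of presheaf categories
sends a representable presheaf to one whose hom functor preserves colimits, hence to a retract of
a representable, hence (idempotents being trivial) to a representable; so `PSh(L(S)) ≌ PSh(L(T))`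
already gives `L(S) ≌ L(T)`. A Morita context is just an equivalence, weak equivalences being
equivalences.

For the Cauchy completions: the morphisms of `L(S)` are exactly the split monomorphisms of
`C(S)`, so an equivalence `C(S) ≌ C(T)` restricts to `L(S) ≌ L(T)`. Conversely, a morphism
`f ⟶ e` of `C(S)` is `m * i*` for a span `f ← d → e` of `L(S)`, two spans give the same element
exactly when they are isomorphic, and composition is composition of spans by pullback in `L(S)`.
So `C(S)` is determined by the category `L(S)`, and an equivalence `L(S) ≌ L(T)`, which preserves
pullbacks, extends to `C(S) ≌ C(T)`.
-/

namespace CategoryTheory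

open Limits Opposite

def HasTrivialIdempotents (C : Type*) [Category C] : Prop :=
  ∀ (X : C) (p : X ⟶ X), p ≫ p = p → p = 𝟙 X

lemma nonempty_iso_of_retract {C D : Type*} [Category C] [Category D]
    (hC : HasTrivialIdempotents C) {G : C ⥤ D} [G.Full] [G.Faithful] {P : D} {X : C}
    (h : Retract P (G.obj X)) : Nonempty (P ≅ G.obj X) := by
  have hidem : G.preimage (h.r ≫ h.i) ≫ G.preimage (h.r ≫ h.i) = G.preimage (h.r ≫ h.i) :=
    G.map_injective (by simp)
  refine ⟨⟨h.i, h.r, h.retract, ?_⟩⟩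
  simpa using congrArg G.map (hC X _ hidem)

namespace Presheaf

variable {C : Type u} [Category.{u} C]

lemma exists_retract_yoneda (P : Cᵒᵖ ⥤ Type u)
    [PreservesColimit (CostructuredArrow.proj yoneda P ⋙ yoneda) (coyoneda.obj (op P))] :
    ∃ X : C, Nonempty (Retract P (yoneda.obj X)) := by
  obtain ⟨X, g, hg⟩ := Types.jointly_surjective _
    (isColimitOfPreserves (coyoneda.obj (op P)) (isColimitTautologicalCocone P)) (𝟙 P)
  exact ⟨X.left, ⟨⟨g, X.hom, hg⟩⟩⟩

end Presheaf

variable {C D : Type u} [Category.{u} C] [Category.{u} D]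

lemma Equivalence.functor_obj_yoneda_mem_essImage (hD : HasTrivialIdempotents D)
    (E : (Cᵒᵖ ⥤ Type u) ≌ (Dᵒᵖ ⥤ Type u)) (X : C) :
    yoneda.essImage (E.functor.obj (yoneda.obj X)) := by
  let P := E.functor.obj (yoneda.obj X)
  have α : coyoneda.obj (Opposite.op P) ≅ E.inverse ⋙ coyoneda.obj (Opposite.op (yoneda.obj X)) :=
    E.toAdjunction.compCoyonedaIso.app (Opposite.op (yoneda.obj X))
  have : PreservesColimit (CostructuredArrow.proj yoneda P ⋙ yoneda)
      (coyoneda.obj (Opposite.op P)) :=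
    preservesColimit_of_natIso _ α.symm
  obtain ⟨Y, ⟨h⟩⟩ := Presheaf.exists_retract_yoneda P
  obtain ⟨i⟩ := nonempty_iso_of_retract hD h
  exact ⟨Y, ⟨i.symm⟩⟩

lemma nonempty_equivalence_of_presheaf_equivalence (hC : HasTrivialIdempotents C)
    (hD : HasTrivialIdempotents D) (E : (Cᵒᵖ ⥤ Type u) ≌ (Dᵒᵖ ⥤ Type u)) :
    Nonempty (C ≌ D) := by
  let K := Functor.essImage.liftFunctor (yoneda ⋙ E.functor) yoneda
    (E.functor_obj_yoneda_mem_essImage hD)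
  have hK : K ⋙ yoneda ≅ yoneda ⋙ E.functor := Functor.essImage.liftFunctorCompIso _ _ _
  have : K.Full := Functor.Full.of_comp_faithful_iso hK
  have : K.Faithful := Functor.Faithful.of_comp_iso hK
  have : K.EssSurj := ⟨fun Y => by
    obtain ⟨X, ⟨i⟩⟩ := E.symm.functor_obj_yoneda_mem_essImage hC Y
    exact ⟨X, ⟨yoneda.preimageIso (hK.app X ≪≫ E.functor.mapIso i ≪≫ E.counitIso.app _)⟩⟩⟩
  have : K.IsEquivalence := {}
  exact ⟨K.asEquivalence⟩

lemma nonempty_presheaf_equivalence_iff (hC : HasTrivialIdempotents C)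
    (hD : HasTrivialIdempotents D) :
    Nonempty ((Cᵒᵖ ⥤ Type u) ≌ (Dᵒᵖ ⥤ Type u)) ↔ Nonempty (C ≌ D) :=
  ⟨fun ⟨E⟩ => nonempty_equivalence_of_presheaf_equivalence hC hD E,
    fun ⟨E⟩ => ⟨Equivalence.congrLeft E.op⟩⟩

end CategoryTheory

namespace InverseSemigroup

variable {S : Type u} [InverseSemigroup S]

lemma eq_star_of_mul_eq {s t e : S} (h : t * s = e) (hs : s * e = s) (ht : e * t = t) :
    t = star s :=
  star_unique s t (by rw [mul_assoc, h, hs]) (by rw [h, ht])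

lemma star_mul_eq_star_of_mul_eq {e s : S} (he : e * e = e) (h : e * s = s) :
    star s * e = star s := by
  rw [← star_idem he, ← star_mul, h]

lemma star_mul_mul_idem {p : S} (hp : p * p = p) (s : S) :
    (star s * p * s) * (star s * p * s) = star s * p * s := by
  have hc : p * (s * star s) = s * star s * p := idem_comm hp (mul_star_self_idem s)
  calc (star s * p * s) * (star s * p * s) = star s * (p * (s * star s)) * p * s := by
        simp only [mul_assoc]
    _ = (star s * s * star s) * (p * p) * s := by rw [hc]; simp only [mul_assoc]
    _ = star s * p * s := by rw [star_mul_star, hp]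

end InverseSemigroup

namespace LCat

variable {S : Type u} [InverseSemigroup S] {d f g e : LCat S}

lemma hom_ext {m n : f ⟶ e} (h : m.1 = n.1) : m = n := Subtype.ext h

@[simp] lemma comp_val (m : f ⟶ g) (n : g ⟶ e) : (m ≫ n).1 = n.1 * m.1 := rfl

lemma cod_mul (m : f ⟶ e) : e.1 * m.1 = m.1 := m.2.1

lemma star_mul_self (m : f ⟶ e) : star m.1 * m.1 = f.1 := m.2.2

lemma mul_dom (m : f ⟶ e) : m.1 * f.1 = m.1 := by
  have h := mul_star_mul m.1
  rwa [mul_assoc, star_mul_self] at h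

lemma dom_mul_star (m : f ⟶ e) : f.1 * star m.1 = star m.1 := by
  have h := star_mul_star m.1
  rwa [star_mul_self] at h

lemma star_mul_cod (m : f ⟶ e) : star m.1 * e.1 = star m.1 :=
  star_mul_eq_star_of_mul_eq e.2 (cod_mul m)

instance (m : f ⟶ e) : Mono m :=
  ⟨fun n n' h => hom_ext <| by
    have h' : star m.1 * (m.1 * n.1) = star m.1 * (m.1 * n'.1) := congrArg (star m.1 * ·.1) h
    simpa only [← mul_assoc, star_mul_self, cod_mul] using h'⟩

lemma hasTrivialIdempotents : HasTrivialIdempotents (LCat S) := fun e p hp => by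
  have hp' : p.1 * p.1 = p.1 := congrArg Subtype.val hp
  have h := star_mul_self p
  rw [star_idem hp', hp'] at h
  exact hom_ext h

def toCauchyCat : LCat S ⥤ CauchyCat S where
  obj e := ⟨e.1, e.2⟩
  map {f e} m := ⟨m.1, show e.1 * m.1 * f.1 = m.1 by rw [cod_mul, mul_dom]⟩

instance : (toCauchyCat : LCat S ⥤ CauchyCat S).Faithful :=
  ⟨fun {_ _ m n} h => hom_ext (show m.1 = n.1 from congrArg (fun σ => σ.1) h)⟩

def splitMonoMap (m : f ⟶ e) : SplitMono (toCauchyCat.map m) where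
  retraction := ⟨star m.1, show f.1 * star m.1 * e.1 = star m.1 by
    rw [dom_mul_star, star_mul_cod]⟩
  id := Subtype.ext (star_mul_self m)

end LCat

namespace CauchyCat

section Semigroup

variable {S : Type u} [Semigroup S] {f g e : CauchyCat S}

lemma hom_ext {σ τ : f ⟶ e} (h : σ.1 = τ.1) : σ = τ := Subtype.ext h

@[simp] lemma comp_val (σ : f ⟶ g) (τ : g ⟶ e) : (σ ≫ τ).1 = τ.1 * σ.1 := rfl

lemma cod_mul (σ : f ⟶ e) : e.1 * σ.1 = σ.1 := idem_left_absorb e.2 σ.2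

lemma mul_dom (σ : f ⟶ e) : σ.1 * f.1 = σ.1 := idem_right_absorb f.2 σ.2

end Semigroup

variable {S : Type u} [InverseSemigroup S] {f e : CauchyCat S}

def toLCat (e : CauchyCat S) : LCat S := ⟨e.1, e.2⟩

lemma star_mul_self_of_splitMono {σ : f ⟶ e} (h : SplitMono σ) : star σ.1 * σ.1 = f.1 := by
  have hr : h.retraction.1 * σ.1 = f.1 := congrArg Subtype.val h.id
  rwa [← eq_star_of_mul_eq hr (mul_dom σ) (cod_mul h.retraction)]

def homOfSplitMono {σ : f ⟶ e} (h : SplitMono σ) : toLCat f ⟶ toLCat e :=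
  ⟨σ.1, cod_mul σ, star_mul_self_of_splitMono h⟩

def isoToLCat (ψ : f ≅ e) : toLCat f ≅ toLCat e where
  hom := homOfSplitMono ⟨ψ.inv, ψ.hom_inv_id⟩
  inv := homOfSplitMono ⟨ψ.hom, ψ.inv_hom_id⟩
  hom_inv_id := LCat.hom_ext (congrArg (fun σ => σ.1) ψ.hom_inv_id)
  inv_hom_id := LCat.hom_ext (congrArg (fun σ => σ.1) ψ.inv_hom_id)

def domObj (σ : f ⟶ e) : LCat S := ⟨star σ.1 * σ.1, star_mul_self_idem σ.1⟩

def domIncl (σ : f ⟶ e) : domObj σ ⟶ toLCat f :=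
  ⟨star σ.1 * σ.1,
    show f.1 * (star σ.1 * σ.1) = star σ.1 * σ.1 by
      rw [idem_comm f.2 (star_mul_self_idem σ.1), mul_assoc, mul_dom],
    show star (star σ.1 * σ.1) * (star σ.1 * σ.1) = star σ.1 * σ.1 by
      rw [star_idem (star_mul_self_idem σ.1), star_mul_self_idem]⟩

def domHom (σ : f ⟶ e) : domObj σ ⟶ toLCat e := ⟨σ.1, cod_mul σ, rfl⟩

end CauchyCat

namespace LCat

open Limits

variable {S : Type u} [InverseSemigroup S] {d d' f e A B X : LCat S}

lemma inv_val (k : d' ≅ d) : k.inv.1 = star k.hom.1 :=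
  eq_star_of_mul_eq (congrArg (fun m => m.1) k.hom_inv_id) (mul_dom k.hom) (cod_mul k.inv)

lemma hom_mul_star_of_iso (k : d' ≅ d) : k.hom.1 * star k.hom.1 = d.1 := by
  rw [← inv_val]
  exact congrArg (fun m => m.1) k.inv_hom_id

def spanHom (i : d ⟶ f) (m : d ⟶ e) : toCauchyCat.obj f ⟶ toCauchyCat.obj e :=
  ⟨m.1 * star i.1, show e.1 * (m.1 * star i.1) * f.1 = m.1 * star i.1 by
    rw [← mul_assoc, cod_mul, mul_assoc, star_mul_cod]⟩

@[simp] lemma spanHom_val (i : d ⟶ f) (m : d ⟶ e) : (spanHom i m).1 = m.1 * star i.1 := rfl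

lemma spanHom_id (e : LCat S) : spanHom (𝟙 e) (𝟙 e) = 𝟙 (toCauchyCat.obj e) :=
  CauchyCat.hom_ext (show e.1 * star e.1 = e.1 by rw [star_idem e.2, e.2])

lemma star_spanHom_mul_spanHom (i : d ⟶ f) (m : d ⟶ e) :
    star (spanHom i m).1 * (spanHom i m).1 = i.1 * star i.1 := by
  rw [spanHom_val, InverseSemigroup.star_mul, InverseSemigroup.star_star, mul_assoc,
    ← mul_assoc (star m.1), star_mul_self, dom_mul_star]

def factorThrough (a : A ⟶ X) (b : B ⟶ X) (h : a.1 * star a.1 = b.1 * star b.1) : B ⟶ A :=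
  ⟨star a.1 * b.1, by rw [← mul_assoc, dom_mul_star],
    by rw [InverseSemigroup.star_mul, InverseSemigroup.star_star, mul_assoc, ← mul_assoc a.1, h,
      mul_star_mul, star_mul_self]⟩

@[simp] lemma factorThrough_comp (a : A ⟶ X) (b : B ⟶ X) (h : a.1 * star a.1 = b.1 * star b.1) :
    factorThrough a b h ≫ a = b :=
  hom_ext (show a.1 * (star a.1 * b.1) = b.1 by rw [← mul_assoc, h, mul_star_mul])

lemma spanHom_eq_spanHom_iff {i : d ⟶ f} {m : d ⟶ e} {i' : d' ⟶ f} {m' : d' ⟶ e} :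
    spanHom i m = spanHom i' m' ↔ ∃ k : d' ≅ d, k.hom ≫ i = i' ∧ k.hom ≫ m = m' := by
  constructor
  · intro h
    have hval : m.1 * star i.1 = m'.1 * star i'.1 := congrArg (fun σ => σ.1) h
    have hrange : i.1 * star i.1 = i'.1 * star i'.1 := by
      rw [← star_spanHom_mul_spanHom i m, ← star_spanHom_mul_spanHom i' m', h]
    refine ⟨⟨factorThrough i i' hrange, factorThrough i' i hrange.symm, ?_, ?_⟩, by simp, ?_⟩
    · exact (cancel_mono i').1 (by simp)
    · exact (cancel_mono i).1 (by simp)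
    · exact hom_ext (show m.1 * (star i.1 * i'.1) = m'.1 by
        rw [← mul_assoc, hval, mul_assoc, star_mul_self, mul_dom])
  · rintro ⟨k, rfl, rfl⟩
    refine CauchyCat.hom_ext ?_
    simp only [spanHom_val, comp_val, InverseSemigroup.star_mul, mul_assoc]
    rw [← mul_assoc k.hom.1, hom_mul_star_of_iso, ← mul_assoc, mul_dom]

variable (a : A ⟶ X) (b : B ⟶ X)

def pullbackObj : LCat S :=
  ⟨star a.1 * (b.1 * star b.1) * a.1, star_mul_mul_idem (mul_star_self_idem b.1) a.1⟩

def pullbackFst : pullbackObj a b ⟶ A :=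
  ⟨star a.1 * (b.1 * star b.1) * a.1,
    show A.1 * (star a.1 * (b.1 * star b.1) * a.1) = _ by
      rw [← mul_assoc, ← mul_assoc, dom_mul_star],
    by rw [star_idem (star_mul_mul_idem (mul_star_self_idem b.1) a.1)]; exact (pullbackObj a b).2⟩

def pullbackSnd : pullbackObj a b ⟶ B :=
  ⟨star b.1 * a.1, by rw [← mul_assoc, dom_mul_star],
    show _ = star a.1 * (b.1 * star b.1) * a.1 by
      rw [InverseSemigroup.star_mul, InverseSemigroup.star_star]; simp only [mul_assoc]⟩

lemma pullback_condition : pullbackFst a b ≫ a = pullbackSnd a b ≫ b := hom_ext <|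
  calc a.1 * (star a.1 * (b.1 * star b.1) * a.1)
      = (b.1 * star b.1) * (a.1 * star a.1) * a.1 := by
        rw [idem_comm (mul_star_self_idem b.1) (mul_star_self_idem a.1)]; simp only [mul_assoc]
    _ = b.1 * (star b.1 * a.1) := by rw [mul_assoc _ _ a.1, mul_star_mul]; simp only [mul_assoc]

lemma pullbackObj_mul_of_comp_eq {Q : LCat S} {x : Q ⟶ A} {y : Q ⟶ B} (w : x ≫ a = y ≫ b) :
    (pullbackObj a b).1 * x.1 = x.1 := by
  have w' : a.1 * x.1 = b.1 * y.1 := congrArg (fun m => m.1) w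
  show star a.1 * (b.1 * star b.1) * a.1 * x.1 = x.1
  simp only [mul_assoc]
  rw [w', ← mul_assoc (star b.1), star_mul_self, cod_mul, ← w', ← mul_assoc, star_mul_self, cod_mul]

lemma isPullback : IsPullback (pullbackFst a b) (pullbackSnd a b) a b :=
  IsPullback.of_isLimit' ⟨pullback_condition a b⟩ <| PullbackCone.IsLimit.mk _
    (fun c => ⟨c.fst.1, pullbackObj_mul_of_comp_eq a b c.condition, star_mul_self c.fst⟩)
    (fun c => hom_ext (pullbackObj_mul_of_comp_eq a b c.condition))
    (fun c => hom_ext <| show star b.1 * a.1 * c.fst.1 = c.snd.1 by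
      rw [mul_assoc, show a.1 * c.fst.1 = b.1 * c.snd.1 from congrArg (fun m => m.1) c.condition,
        ← mul_assoc, star_mul_self, cod_mul])
    (fun c m hm _ => (cancel_mono (pullbackFst a b)).1
      (hm.trans (hom_ext (pullbackObj_mul_of_comp_eq a b c.condition).symm)))

variable {a b}

lemma mul_star_eq_of_isPullback {P : LCat S} {x : P ⟶ A} {y : P ⟶ B} (h : IsPullback x y a b) :
    y.1 * star x.1 = star b.1 * a.1 := by
  have hspan : spanHom (pullbackFst a b) (pullbackSnd a b) = spanHom x y :=
    spanHom_eq_spanHom_iff.2 ⟨h.isoIsPullback _ _ (isPullback a b),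
      h.isoIsPullback_hom_fst _ _ _, h.isoIsPullback_hom_snd _ _ _⟩
  rw [← spanHom_val, ← hspan, spanHom_val]
  show star b.1 * a.1 * star (star a.1 * (b.1 * star b.1) * a.1) = star b.1 * a.1
  rw [star_idem (star_mul_mul_idem (mul_star_self_idem b.1) a.1)]
  calc star b.1 * a.1 * (star a.1 * (b.1 * star b.1) * a.1)
      = star b.1 * ((a.1 * star a.1) * (b.1 * star b.1)) * a.1 := by simp only [mul_assoc]
    _ = (star b.1 * b.1 * star b.1) * (a.1 * star a.1 * a.1) := by
        rw [idem_comm (mul_star_self_idem a.1) (mul_star_self_idem b.1)]; simp only [mul_assoc]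
    _ = star b.1 * a.1 := by rw [InverseSemigroup.star_mul_star, mul_star_mul]

lemma spanHom_comp_spanHom {d₁ d₂ f₁ f₂ f₃ P : LCat S} (i₁ : d₁ ⟶ f₁) (m₁ : d₁ ⟶ f₂)
    (i₂ : d₂ ⟶ f₂) (m₂ : d₂ ⟶ f₃) {x : P ⟶ d₁} {y : P ⟶ d₂} (h : IsPullback x y m₁ i₂) :
    spanHom i₁ m₁ ≫ spanHom i₂ m₂ = spanHom (x ≫ i₁) (y ≫ m₂) := by
  refine CauchyCat.hom_ext ?_
  simp only [CauchyCat.comp_val, spanHom_val, comp_val, InverseSemigroup.star_mul]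
  rw [mul_assoc, mul_assoc, ← mul_assoc y.1, mul_star_eq_of_isPullback h]
  simp only [mul_assoc]

end LCat

namespace CauchyCat

open LCat

variable {S : Type u} [InverseSemigroup S]

lemma spanHom_domIncl_domHom {f e : CauchyCat S} (σ : f ⟶ e) :
    spanHom (domIncl σ) (domHom σ) = σ :=
  hom_ext (show σ.1 * star (star σ.1 * σ.1) = σ.1 by
    rw [star_idem (star_mul_self_idem σ.1), ← mul_assoc, mul_star_mul])

lemma exists_spanHom {f e : CauchyCat S} (σ : f ⟶ e) :
    ∃ (d : LCat S) (i : d ⟶ toLCat f) (m : d ⟶ toLCat e), spanHom i m = σ :=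
  ⟨_, _, _, spanHom_domIncl_domHom σ⟩

variable {T : Type u} [InverseSemigroup T] (H : CauchyCat S ⥤ CauchyCat T)

def restrictToLCat : LCat S ⥤ LCat T where
  obj e := toLCat (H.obj (toCauchyCat.obj e))
  map m := homOfSplitMono ((splitMonoMap m).map H)
  map_id e := LCat.hom_ext <| show (H.map (toCauchyCat.map (𝟙 e))).1 = _ by
    rw [toCauchyCat.map_id, H.map_id]; rfl
  map_comp m n := LCat.hom_ext <| show (H.map (toCauchyCat.map (m ≫ n))).1 = _ by
    rw [toCauchyCat.map_comp, H.map_comp]; rfl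

instance [H.Faithful] : (restrictToLCat H).Faithful where
  map_injective {_ _ m n} h := toCauchyCat.map_injective <| H.map_injective <| hom_ext <|
    show (H.map (toCauchyCat.map m)).1 = (H.map (toCauchyCat.map n)).1 from
      congrArg (fun m => m.1) h

instance [H.Full] [H.Faithful] : (restrictToLCat H).Full where
  map_surjective {f e} n := by
    let c : toCauchyCat.obj f ⟶ toCauchyCat.obj e := H.preimage (toCauchyCat.map n)
    let r : toCauchyCat.obj e ⟶ toCauchyCat.obj f := H.preimage (splitMonoMap n).retraction
    have hc : H.map c = toCauchyCat.map n := H.map_preimage _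
    have hr : H.map r = (splitMonoMap n).retraction := H.map_preimage _
    have hcr : SplitMono c :=
      ⟨r, H.map_injective (by rw [H.map_comp, hc, hr, H.map_id]; exact (splitMonoMap n).id)⟩
    exact ⟨homOfSplitMono hcr, LCat.hom_ext (congrArg (fun σ => σ.1) hc)⟩

instance [H.EssSurj] : (restrictToLCat H).EssSurj where
  mem_essImage e :=
    ⟨toLCat (H.objPreimage (toCauchyCat.obj e)),
      ⟨isoToLCat (H.objObjPreimageIso (toCauchyCat.obj e))⟩⟩

end CauchyCat

namespace LCat

open Limits CauchyCat

variable {S T : Type u} [InverseSemigroup S] [InverseSemigroup T] (F : LCat S ⥤ LCat T)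

def extendMap {f e : CauchyCat S} (σ : f ⟶ e) :
    toCauchyCat.obj (F.obj (toLCat f)) ⟶ toCauchyCat.obj (F.obj (toLCat e)) :=
  spanHom (F.map (domIncl σ)) (F.map (domHom σ))

lemma extendMap_spanHom {d f e : LCat S} (i : d ⟶ f) (m : d ⟶ e) :
    extendMap F (spanHom i m) = spanHom (F.map i) (F.map m) := by
  obtain ⟨k, hi, hm⟩ := spanHom_eq_spanHom_iff.1 (spanHom_domIncl_domHom (spanHom i m))
  exact spanHom_eq_spanHom_iff.2
    ⟨F.mapIso k, by rw [F.mapIso_hom, ← F.map_comp, hi]; rfl,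
      by rw [F.mapIso_hom, ← F.map_comp, hm]; rfl⟩

def extendToCauchyCat [PreservesLimitsOfShape WalkingCospan F] : CauchyCat S ⥤ CauchyCat T where
  obj f := toCauchyCat.obj (F.obj (toLCat f))
  map := extendMap F
  map_id f := by
    have h := extendMap_spanHom F (𝟙 (toLCat f)) (𝟙 (toLCat f))
    rwa [spanHom_id, F.map_id, spanHom_id] at h
  map_comp τ σ := by
    obtain ⟨d₁, i₁, m₁, rfl⟩ := exists_spanHom τ
    obtain ⟨d₂, i₂, m₂, rfl⟩ := exists_spanHom σ
    change extendMap F (spanHom i₁ m₁ ≫ spanHom i₂ m₂) =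
      extendMap F (spanHom i₁ m₁) ≫ extendMap F (spanHom i₂ m₂)
    rw [spanHom_comp_spanHom i₁ m₁ i₂ m₂ (isPullback m₁ i₂), extendMap_spanHom,
      extendMap_spanHom, extendMap_spanHom, F.map_comp, F.map_comp]
    exact (spanHom_comp_spanHom _ _ _ _ (F.map_isPullback (isPullback m₁ i₂))).symm

variable [PreservesLimitsOfShape WalkingCospan F]

instance [F.Full] [F.Faithful] : (extendToCauchyCat F).Faithful where
  map_injective {_ _} σ σ' h := by
    obtain ⟨d, i, m, rfl⟩ := exists_spanHom σ
    obtain ⟨d', i', m', rfl⟩ := exists_spanHom σ'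
    change extendMap F (spanHom i m) = extendMap F (spanHom i' m') at h
    rw [extendMap_spanHom, extendMap_spanHom] at h
    obtain ⟨k, hi, hm⟩ := spanHom_eq_spanHom_iff.1 h
    exact spanHom_eq_spanHom_iff.2 ⟨F.preimageIso k, F.map_injective (by simpa using hi),
      F.map_injective (by simpa using hm)⟩

instance [F.Full] [F.EssSurj] : (extendToCauchyCat F).Full where
  map_surjective {f e} δ := by
    obtain ⟨d', i', m', rfl⟩ := exists_spanHom δ
    let φ := F.objObjPreimageIso d'
    let i : F.objPreimage d' ⟶ toLCat f := F.preimage (φ.hom ≫ i')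
    let m : F.objPreimage d' ⟶ toLCat e := F.preimage (φ.hom ≫ m')
    refine ⟨spanHom i m, ?_⟩
    change extendMap F (spanHom i m) = _
    rw [extendMap_spanHom, F.map_preimage, F.map_preimage]
    exact (spanHom_eq_spanHom_iff.2 ⟨φ, rfl, rfl⟩).symm

instance [F.EssSurj] : (extendToCauchyCat F).EssSurj where
  mem_essImage e :=
    ⟨toCauchyCat.obj (F.objPreimage (toLCat e)),
      ⟨toCauchyCat.mapIso (F.objObjPreimageIso (toLCat e))⟩⟩

end LCat

lemma LCat.nonempty_equivalence_iff_cauchyCat {S T : Type u} [InverseSemigroup S]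
    [InverseSemigroup T] : Nonempty (LCat S ≌ LCat T) ↔ Nonempty (CauchyCat S ≌ CauchyCat T) := by
  constructor
  · rintro ⟨E⟩
    have : (extendToCauchyCat E.functor).IsEquivalence := {}
    exact ⟨(extendToCauchyCat E.functor).asEquivalence⟩
  · rintro ⟨E⟩
    have : (CauchyCat.restrictToLCat E.functor).IsEquivalence := {}
    exact ⟨(CauchyCat.restrictToLCat E.functor).asEquivalence⟩

lemma moritaContext_iff_nonempty_equivalence {A B : Type u} [Category.{u} A] [Category.{u} B] :
    MoritaContext A B ↔ Nonempty (A ≌ B) := by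
  constructor
  · rintro ⟨U, _, F, G, _, _, _, _, _, _⟩
    have : F.IsEquivalence := {}
    have : G.IsEquivalence := {}
    exact ⟨F.asEquivalence.trans G.asEquivalence.symm⟩
  · rintro ⟨E⟩
    exact ⟨B, inferInstance, E.functor, 𝟭 B, inferInstance, inferInstance, inferInstance,
      inferInstance, inferInstance, inferInstance⟩

/-- For inverse semigroups `S` and `T`, the following are equivalent: the
classifying toposes `PSh(L(S))` and `PSh(L(T))` are equivalent; `L(S)` and `L(T)`
form a Morita context; `C(S)` and `C(T)` form a Morita context. -/
theorem classifying_topos_equivalence_iff_moritaContext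
    (S T : Type u) [InverseSemigroup S] [InverseSemigroup T] :
    (Nonempty (((LCat S)ᵒᵖ ⥤ Type u) ≌ ((LCat T)ᵒᵖ ⥤ Type u)) ↔
      MoritaContext (LCat S) (LCat T)) ∧
    (Nonempty (((LCat S)ᵒᵖ ⥤ Type u) ≌ ((LCat T)ᵒᵖ ⥤ Type u)) ↔
      MoritaContext (CauchyCat S) (CauchyCat T)) := by
  rw [moritaContext_iff_nonempty_equivalence, moritaContext_iff_nonempty_equivalence,
    nonempty_presheaf_equivalence_iff LCat.hasTrivialIdempotents LCat.hasTrivialIdempotents,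
    LCat.nonempty_equivalence_iff_cauchyCat]
  exact ⟨Iff.rfl, Iff.rfl⟩
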